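/- Let G be a group acting uniformly properly by isometries on a δ-hyperbolic geodesic metric space with unbounded orbits. Then G contains a loxodromic element. -/

import Mathlib

open Bornology

/-- A geodesic segment from `x` to `y`, parametrized by arc length on `[0, dist x y]`. -/
def IsGeodesicSeg {S : Type*} [MetricSpace S] (f : ℝ → S) (x y : S) : Prop :=
  f 0 = x ∧ f (dist x y) = y ∧
    ∀ s ∈ Set.Icc (0:ℝ) (dist x y), ∀ t ∈ Set.Icc (0:ℝ) (dist x y),
      dist (f s) (f t) = |s - t|

/-- A metric space is geodesic if any two points are joined by a geodesic segment. -/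
def GeodesicMetricSpace (S : Type*) [MetricSpace S] : Prop :=
  ∀ x y : S, ∃ f : ℝ → S, IsGeodesicSeg f x y

/-- Rips condition: every side of a geodesic triangle lies in the union of the
δ-neighbourhoods of the other two sides. -/
def RipsHyperbolic (S : Type*) [MetricSpace S] (δ : ℝ) : Prop :=
  ∀ (x y z : S) (f g h : ℝ → S), IsGeodesicSeg f x y → IsGeodesicSeg g y z →
    IsGeodesicSeg h x z →
    ∀ s ∈ Set.Icc (0:ℝ) (dist x y),
      (∃ t ∈ Set.Icc (0:ℝ) (dist y z), dist (f s) (g t) ≤ δ) ∨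
      (∃ t ∈ Set.Icc (0:ℝ) (dist x z), dist (f s) (h t) ≤ δ)

/-- The Gromov product `(x,y)_t`. -/
noncomputable def gromov {S : Type*} [MetricSpace S] (x y t : S) : ℝ :=
  (dist x t + dist y t - dist x y) / 2

/-- Acylindricity of an isometric action of `G` on `S`. -/
def AcylindricalAction (G S : Type*) [Group G] [MetricSpace S] [MulAction G S] : Prop :=
  ∀ ε : ℝ, 0 < ε → ∃ R : ℝ, ∃ N : ℕ, 0 < R ∧
    ∀ x y : S, dist x y ≥ R →
      {g : G | dist x (g • x) ≤ ε ∧ dist y (g • y) ≤ ε}.Finite ∧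
      {g : G | dist x (g • x) ≤ ε ∧ dist y (g • y) ≤ ε}.ncard ≤ N

/-- `g` is loxodromic: some orbit map `n ↦ gⁿ • s` is a quasi-isometric embedding of ℤ. -/
def Loxodromic {G S : Type*} [Group G] [MetricSpace S] [MulAction G S] (g : G) : Prop :=
  ∃ s : S, ∃ lam C : ℝ, 1 ≤ lam ∧ 0 ≤ C ∧ ∀ m n : ℤ,
    lam⁻¹ * |(m : ℝ) - (n : ℝ)| - C ≤ dist ((g ^ m) • s) ((g ^ n) • s) ∧
    dist ((g ^ m) • s) ((g ^ n) • s) ≤ lam * |(m : ℝ) - (n : ℝ)| + C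

/-- The action of G on S is uniformly proper. -/
def UniformlyProper (G S : Type*) [Group G] [MetricSpace S] [MulAction G S] : Prop :=
  ∀ ε : ℝ, 0 < ε → ∃ N : ℕ, ∀ s : S,
    {g : G | dist s (g • s) ≤ ε}.Finite ∧ {g : G | dist s (g • s) ≤ ε}.ncard ≤ N

/-!
If no element of `G` is loxodromic, then every `g` satisfies
`d(s, g s) ≤ 2 (g s, g⁻¹ s)_s + 6δ`: otherwise the Gromov products along the orbit `gⁿ s`
stay small and the orbit is a quasi-geodesic. Applying this to products `a b` shows that any two
orbit points far from `s` are seen from `s` in the same direction,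
`min(|a|, |b|) ≤ 2 (a s, b s)_s + 15δ` with `|g| = d(s, g s)`. Hence, for `|c|` much larger
than `R`, every `h` with `|h| ≤ R` moves the point at distance `R / 2` from `s` on a geodesic
`[s, c s]` by at most `57δ`. Since `G` is infinite there are arbitrarily many such `h`,
contradicting uniform properness.
-/

section GromovProduct

variable {S : Type*} [MetricSpace S]

lemma gromov_nonneg (x y t : S) : 0 ≤ gromov x y t := by
  have := dist_triangle_right x y t
  unfold gromov; linarith

lemma gromov_comm (x y t : S) : gromov x y t = gromov y x t := by
  unfold gromov; rw [dist_comm x y]; ring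

lemma dist_eq_gromov (x y t : S) : dist x y = dist x t + dist y t - 2 * gromov x y t := by
  unfold gromov; ring

lemma gromov_add_gromov (p q r : S) : gromov p q r + gromov p r q = dist q r := by
  unfold gromov; rw [dist_comm q r, dist_comm p q]; ring

end GromovProduct

namespace IsGeodesicSeg

variable {S : Type*} [MetricSpace S] {f : ℝ → S} {x y : S} {t : ℝ}

lemma dist_left (hf : IsGeodesicSeg f x y) (ht : t ∈ Set.Icc 0 (dist x y)) :
    dist x (f t) = t := by
  have h := hf.2.2 0 ⟨le_rfl, dist_nonneg⟩ t ht
  rw [hf.1, zero_sub, abs_neg, abs_of_nonneg ht.1] at h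
  exact h

lemma dist_right (hf : IsGeodesicSeg f x y) (ht : t ∈ Set.Icc 0 (dist x y)) :
    dist (f t) y = dist x y - t := by
  have h := hf.2.2 t ht (dist x y) ⟨dist_nonneg, le_rfl⟩
  rw [hf.2.1, abs_sub_comm, abs_of_nonneg (sub_nonneg.mpr ht.2)] at h
  exact h

lemma gromov_eq (hf : IsGeodesicSeg f x y) (ht : t ∈ Set.Icc 0 (dist x y)) :
    gromov (f t) y x = t := by
  unfold gromov
  rw [dist_comm (f t) x, hf.dist_left ht, dist_comm y x, hf.dist_right ht]
  ring

lemma gromov_le_dist (hf : IsGeodesicSeg f x y) (ht : t ∈ Set.Icc 0 (dist x y)) (w : S) :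
    gromov x y w ≤ dist w (f t) := by
  have h₁ := hf.dist_left ht
  have h₂ := hf.dist_right ht
  have h₃ := dist_triangle x (f t) w
  have h₄ := dist_triangle y (f t) w
  rw [dist_comm y (f t)] at h₄
  rw [dist_comm (f t) w] at h₃ h₄
  unfold gromov; linarith

lemma continuousOn (hf : IsGeodesicSeg f x y) : ContinuousOn f (Set.Icc 0 (dist x y)) := by
  refine (LipschitzOnWith.of_dist_le_mul fun a ha b hb => ?_).continuousOn (K := 1)
  rw [hf.2.2 a ha b hb]
  simp [Real.dist_eq]

lemma infDist_image_le_iff (hf : IsGeodesicSeg f x y) (p : S) (r : ℝ) :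
    Metric.infDist p (f '' Set.Icc 0 (dist x y)) ≤ r ↔
      ∃ u ∈ Set.Icc 0 (dist x y), dist p (f u) ≤ r := by
  constructor
  · intro hle
    have hne : (f '' Set.Icc 0 (dist x y)).Nonempty := ⟨f 0, 0, ⟨le_rfl, dist_nonneg⟩, rfl⟩
    obtain ⟨_, ⟨u, hu, rfl⟩, heq⟩ :=
      (isCompact_Icc.image_of_continuousOn hf.continuousOn).exists_infDist_eq_dist hne p
    exact ⟨u, hu, heq ▸ hle⟩
  · rintro ⟨u, hu, hd⟩
    exact (Metric.infDist_le_dist_of_mem (Set.mem_image_of_mem f hu)).trans hd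

lemma le_gromov_add_of_dist_le {w : S} {g h : ℝ → S} {δ u : ℝ} (hg : IsGeodesicSeg g w x)
    (hh : IsGeodesicSeg h w y) (ht : t ∈ Set.Icc 0 (dist w x)) (hu : u ∈ Set.Icc 0 (dist w y))
    (hd : dist (g t) (h u) ≤ δ) : t ≤ gromov x y w + δ := by
  have h₁ := hg.dist_left ht
  have h₂ := hg.dist_right ht
  have h₃ := hh.dist_left hu
  have h₄ := hh.dist_right hu
  have h₅ := dist_triangle w (h u) (g t)
  rw [dist_comm (h u) (g t)] at h₅
  have h₆ := dist_triangle4 x (g t) (h u) y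
  rw [dist_comm x (g t)] at h₆
  unfold gromov; rw [dist_comm x w, dist_comm y w]; linarith

end IsGeodesicSeg

section Hyperbolic

variable {S : Type*} [MetricSpace S] {δ : ℝ}

lemma exists_dist_le_gromov_add (hδ : 0 ≤ δ) (hgeo : GeodesicMetricSpace S)
    (hhyp : RipsHyperbolic S δ) (w : S) {f : ℝ → S} {x y : S} (hf : IsGeodesicSeg f x y) :
    ∃ t ∈ Set.Icc 0 (dist x y), dist w (f t) ≤ gromov x y w + 2 * δ := by
  obtain ⟨g, hg⟩ := hgeo w x
  obtain ⟨h, hh⟩ := hgeo w y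
  -- Walking along `[w, x]`, the point passes from the `δ`-neighbourhood of `[w, y]` to that of
  -- `[x, y]`; by connectedness it is in both at some moment.
  set near : (ℝ → S) → ℝ → Set ℝ := fun k d =>
    Set.Icc 0 (dist w x) ∩ (fun t => Metric.infDist (g t) (k '' Set.Icc 0 d)) ⁻¹' Set.Iic δ
  have hclosed : ∀ k d, IsClosed (near k d) := fun k d =>
    ContinuousOn.preimage_isClosed_of_isClosed
      ((Metric.continuous_infDist_pt _).comp_continuousOn hg.continuousOn) isClosed_Icc
      isClosed_Iic
  have hmem_f : ∀ t ∈ Set.Icc 0 (dist w x), (t ∈ near f (dist x y) ↔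
      ∃ u ∈ Set.Icc 0 (dist x y), dist (g t) (f u) ≤ δ) := fun t ht =>
    (and_iff_right ht).trans (hf.infDist_image_le_iff _ _)
  have hmem_h : ∀ t ∈ Set.Icc 0 (dist w x), (t ∈ near h (dist w y) ↔
      ∃ u ∈ Set.Icc 0 (dist w y), dist (g t) (h u) ≤ δ) := fun t ht =>
    (and_iff_right ht).trans (hh.infDist_image_le_iff _ _)
  have hcover : Set.Icc 0 (dist w x) ⊆ near f (dist x y) ∪ near h (dist w y) := fun t ht =>
    (hhyp w x y g f h hg hf hh t ht).imp (hmem_f t ht).mpr (hmem_h t ht).mpr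
  have hend : dist w x ∈ Set.Icc 0 (dist w x) := ⟨dist_nonneg, le_rfl⟩
  have hstart : (0 : ℝ) ∈ Set.Icc 0 (dist w x) := ⟨le_rfl, dist_nonneg⟩
  have hend_near : dist w x ∈ near f (dist x y) :=
    (hmem_f _ hend).mpr ⟨0, ⟨le_rfl, dist_nonneg⟩, by rw [hg.2.1, hf.1, dist_self]; exact hδ⟩
  have hstart_near : 0 ∈ near h (dist w y) :=
    (hmem_h _ hstart).mpr ⟨0, ⟨le_rfl, dist_nonneg⟩, by rw [hg.1, hh.1, dist_self]; exact hδ⟩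
  obtain ⟨t, ht, htf, hth⟩ := isPreconnected_closed_iff.mp isPreconnected_Icc _ _
    (hclosed f (dist x y)) (hclosed h (dist w y)) hcover ⟨_, hend, hend_near⟩
    ⟨_, hstart, hstart_near⟩
  obtain ⟨u, hu, hdu⟩ := (hmem_f t ht).mp htf
  obtain ⟨v, hv, hdv⟩ := (hmem_h t ht).mp hth
  refine ⟨u, hu, ?_⟩
  calc dist w (f u) ≤ dist w (g t) + dist (g t) (f u) := dist_triangle _ _ _
    _ ≤ t + δ := by rw [hg.dist_left ht]; linarith
    _ ≤ gromov x y w + 2 * δ := by linarith [hg.le_gromov_add_of_dist_le hh ht hv hdv]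

lemma min_gromov_le_gromov_add (hδ : 0 ≤ δ) (hgeo : GeodesicMetricSpace S)
    (hhyp : RipsHyperbolic S δ) (w x y z : S) :
    min (gromov x y w) (gromov y z w) ≤ gromov x z w + 3 * δ := by
  obtain ⟨f, hf⟩ := hgeo x z
  obtain ⟨t, ht, hw⟩ := exists_dist_le_gromov_add hδ hgeo hhyp w hf
  obtain ⟨g, hg⟩ := hgeo z y
  obtain ⟨h, hh⟩ := hgeo x y
  rcases hhyp x z y f g h hf hg hh t ht with ⟨u, hu, hdu⟩ | ⟨u, hu, hdu⟩
  · have := hg.gromov_le_dist hu w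
    have := dist_triangle w (f t) (g u)
    rw [gromov_comm z y] at *
    exact (min_le_right _ _).trans (by linarith)
  · have := hh.gromov_le_dist hu w
    have := dist_triangle w (f t) (h u)
    exact (min_le_left _ _).trans (by linarith)

lemma gromov_le_of_lt_gromov (hδ : 0 ≤ δ) (hgeo : GeodesicMetricSpace S)
    (hhyp : RipsHyperbolic S δ) {w x y z : S} (h : gromov x z w + 3 * δ < gromov x y w) :
    gromov y z w ≤ gromov x z w + 3 * δ :=
  (min_le_iff.mp (min_gromov_le_gromov_add hδ hgeo hhyp w x y z)).resolve_left h.not_ge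

lemma sub_le_gromov_of_le_gromov (hδ : 0 ≤ δ) (hgeo : GeodesicMetricSpace S)
    (hhyp : RipsHyperbolic S δ) {w x y z : S} {r : ℝ} (hxy : r ≤ gromov x y w)
    (hyz : r ≤ gromov y z w) : r - 3 * δ ≤ gromov x z w := by
  linarith [(le_min hxy hyz).trans (min_gromov_le_gromov_add hδ hgeo hhyp w x y z)]

end Hyperbolic

section IsometricAction

variable {G S : Type*} [Group G] [MetricSpace S] [MulAction G S] [IsIsometricSMul G S] {δ : ℝ}

lemma gromov_smul (g : G) (x y t : S) : gromov (g • x) (g • y) (g • t) = gromov x y t := by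
  unfold gromov; rw [dist_smul, dist_smul, dist_smul]

lemma dist_inv_smul (g : G) (x : S) : dist x (g⁻¹ • x) = dist x (g • x) := by
  rw [← dist_smul g, smul_inv_smul, dist_comm]

lemma dist_mul_smul (a b : G) (s : S) :
    dist s ((a * b) • s) = dist s (a • s) + dist s (b • s) - 2 * gromov (a⁻¹ • s) (b • s) s := by
  rw [mul_smul, ← dist_smul a⁻¹, inv_smul_smul, dist_eq_gromov _ _ s,
    dist_comm _ s, dist_inv_smul, dist_comm (b • s)]

lemma dist_pow_smul_le (g : G) (x : S) (n : ℕ) : dist x (g ^ n • x) ≤ n * dist x (g • x) := by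
  induction n with
  | zero => simp
  | succ n ih =>
    calc dist x (g ^ (n + 1) • x) ≤ dist x (g • x) + dist (g • x) (g ^ (n + 1) • x) :=
          dist_triangle _ _ _
      _ = dist x (g • x) + dist x (g ^ n • x) := by rw [pow_succ', mul_smul, dist_smul]
      _ ≤ (n + 1 : ℕ) * dist x (g • x) := by push_cast; linarith

lemma dist_zpow_smul_zpow_smul (g : G) (x : S) (m n : ℤ) :
    dist (g ^ m • x) (g ^ n • x) = dist x (g ^ (n - m).natAbs • x) := by
  rw [← dist_smul (g ^ m)⁻¹, inv_smul_smul, smul_smul, ← zpow_neg, ← zpow_add, neg_add_eq_sub]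
  rcases Int.natAbs_eq (n - m) with h | h
  · rw [h, zpow_natCast, Int.natAbs_natCast]
  · rw [h, zpow_neg, dist_inv_smul, zpow_natCast, Int.natAbs_neg, Int.natAbs_natCast]

lemma loxodromic_of_le_dist_pow_smul {g : G} {x : S} {ε : ℝ} (hε : 0 < ε)
    (h : ∀ n : ℕ, n * ε ≤ dist x (g ^ n • x)) : Loxodromic (S := S) g := by
  set lam := max 1 (max (dist x (g • x)) ε⁻¹)
  have hlam : ε⁻¹ ≤ lam := (le_max_right _ _).trans (le_max_right _ _)
  have hlamε : lam⁻¹ ≤ ε := by rw [inv_le_comm₀ (by positivity) hε]; exact hlam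
  refine ⟨x, lam, 0, le_max_left _ _, le_rfl, fun m n => ?_⟩
  rw [dist_zpow_smul_zpow_smul, abs_sub_comm, ← Int.cast_sub, ← Int.cast_abs, Int.abs_eq_natAbs,
    Int.cast_natCast]
  set k := (n - m).natAbs
  have hk : (0 : ℝ) ≤ k := Nat.cast_nonneg k
  constructor
  · nlinarith [h k]
  · nlinarith [dist_pow_smul_le g x k, (le_max_left _ _).trans (le_max_right _ _ : _ ≤ lam)]

/-- Along the orbit `gⁿ • x`, consecutive Gromov products `(x, gⁿ⁺¹x)_{gⁿx}` stay below
`(gx, g⁻¹x)_x + 3δ`, so each step adds at least `d(x, gx) - 2 (gx, g⁻¹x)_x - 6δ`. -/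
lemma le_dist_pow_smul (hδ : 0 ≤ δ) (hgeo : GeodesicMetricSpace S)
    (hhyp : RipsHyperbolic S δ) (g : G) (x : S)
    (hg : 2 * gromov (g • x) (g⁻¹ • x) x + 6 * δ < dist x (g • x)) (n : ℕ) :
    n * (dist x (g • x) - 2 * gromov (g • x) (g⁻¹ • x) x - 6 * δ) ≤ dist x (g ^ n • x) := by
  set K := gromov (g • x) (g⁻¹ • x) x
  set L := dist x (g • x)
  have hK : ∀ n : ℕ, gromov (g ^ n • x) (g ^ (n + 2) • x) (g ^ (n + 1) • x) = K := by
    intro n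
    have e₁ : g ^ n • x = g ^ (n + 1) • g⁻¹ • x := by rw [smul_smul, pow_succ, mul_inv_cancel_right]
    have e₂ : g ^ (n + 2) • x = g ^ (n + 1) • g • x := by rw [smul_smul, ← pow_succ]
    rw [e₁, e₂, gromov_smul, gromov_comm]
  have hL : ∀ n : ℕ, dist (g ^ n • x) (g ^ (n + 1) • x) = L := by
    intro n
    rw [pow_succ, mul_smul, dist_smul]
  have step : ∀ n : ℕ, gromov x (g ^ (n + 1) • x) (g ^ n • x) ≤ K + 3 * δ ∧
      (n + 1) * (L - 2 * K - 6 * δ) ≤ dist x (g ^ (n + 1) • x) := by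
    intro n
    induction n with
    | zero =>
      have h0 : gromov x (g ^ 1 • x) (g ^ 0 • x) = 0 := by
        simp [gromov, dist_comm (g • x) x]
      rw [h0, zero_add, pow_one]
      push_cast
      constructor <;> linarith [gromov_nonneg (g • x) (g⁻¹ • x) x]
    | succ n ih =>
      have hback : L - gromov x (g ^ (n + 1) • x) (g ^ n • x) =
          gromov (g ^ n • x) x (g ^ (n + 1) • x) := by
        have := gromov_add_gromov x (g ^ n • x) (g ^ (n + 1) • x)
        rw [hL, gromov_comm x] at this
        linarith
      have hQ : gromov x (g ^ (n + 2) • x) (g ^ (n + 1) • x) ≤ K + 3 * δ := by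
        rw [← hK n]
        exact gromov_le_of_lt_gromov hδ hgeo hhyp (by rw [hK, ← hback]; linarith [ih.1])
      have hd := dist_eq_gromov x (g ^ (n + 2) • x) (g ^ (n + 1) • x)
      rw [dist_comm (g ^ (n + 2) • x), hL] at hd
      refine ⟨hQ, ?_⟩
      push_cast
      linarith [ih.2]
  rcases n with _ | n
  · simp
  · exact_mod_cast (step n).2


lemma loxodromic_of_gromov_lt (hδ : 0 ≤ δ) (hgeo : GeodesicMetricSpace S)
    (hhyp : RipsHyperbolic S δ) {g : G} {x : S}
    (hg : 2 * gromov (g • x) (g⁻¹ • x) x + 6 * δ < dist x (g • x)) : Loxodromic (S := S) g :=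
  loxodromic_of_le_dist_pow_smul (by linarith) (le_dist_pow_smul hδ hgeo hhyp g x hg)

lemma dist_smul_le_gromov_of_not_loxodromic (hδ : 0 ≤ δ) (hgeo : GeodesicMetricSpace S)
    (hhyp : RipsHyperbolic S δ) {g : G} (hg : ¬ Loxodromic (S := S) g) (x : S) :
    dist x (g • x) ≤ 2 * gromov (g • x) (g⁻¹ • x) x + 6 * δ :=
  le_of_not_gt fun h => hg (loxodromic_of_gromov_lt hδ hgeo hhyp h)

/-- Otherwise `(a * b) • s` and `(a * b)⁻¹ • s` would be far apart as seen from `s`, and `a * b`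
would be loxodromic by `loxodromic_of_gromov_lt`. -/
lemma min_dist_smul_le_gromov (hδ : 0 ≤ δ) (hgeo : GeodesicMetricSpace S)
    (hhyp : RipsHyperbolic S δ) (hno : ∀ g : G, ¬ Loxodromic (S := S) g) (s : S) (a b : G) :
    min (dist s (a • s)) (dist s (b • s)) ≤ 2 * gromov (a • s) (b • s) s + 15 * δ := by
  by_contra! hP
  set P := gromov (a • s) (b • s) s
  set X := gromov (a⁻¹ • s) (b • s) s
  have ha : 2 * P + 15 * δ < dist s (a • s) := hP.trans_le (min_le_left _ _)
  have hb : 2 * P + 15 * δ < dist s (b • s) := hP.trans_le (min_le_right _ _)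
  have hKa := dist_smul_le_gromov_of_not_loxodromic hδ hgeo hhyp (hno a) s
  have hKb := dist_smul_le_gromov_of_not_loxodromic hδ hgeo hhyp (hno b) s
  have hKab := dist_smul_le_gromov_of_not_loxodromic hδ hgeo hhyp (hno (a * b)) s
  have hab := dist_mul_smul a b s
  have hX : X ≤ P + 3 * δ := gromov_le_of_lt_gromov hδ hgeo hhyp (by linarith)
  have hY : gromov (a • s) (b⁻¹ • s) s ≤ P + 3 * δ := by
    have := gromov_le_of_lt_gromov hδ hgeo hhyp (w := s) (x := b • s) (y := b⁻¹ • s) (z := a • s)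
    rw [gromov_comm (b⁻¹ • s), gromov_comm (b • s)] at this
    exact this (by linarith)
  have hE₁ : gromov (a • s) ((a * b) • s) s = dist s (a • s) - X := by
    have : dist (a • s) ((a * b) • s) = dist s (b • s) := by rw [mul_smul, dist_smul]
    unfold gromov; rw [this, dist_comm (a • s), dist_comm ((a * b) • s), hab]; ring
  have hZ : gromov ((a * b) • s) (b⁻¹ • s) s ≤ P + 6 * δ := by
    have := gromov_le_of_lt_gromov hδ hgeo hhyp (w := s) (x := a • s) (y := (a * b) • s)
      (z := b⁻¹ • s) (by linarith)
    linarith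
  have hE₂ : gromov (b⁻¹ • s) ((a * b)⁻¹ • s) s = dist s (b • s) - X := by
    have : dist (b⁻¹ • s) ((a * b)⁻¹ • s) = dist s (a • s) := by
      rw [mul_inv_rev, mul_smul, dist_smul, dist_inv_smul]
    unfold gromov
    rw [this, dist_comm (b⁻¹ • s), dist_comm ((a * b)⁻¹ • s), dist_inv_smul, dist_inv_smul, hab]
    ring
  have hKab' : gromov ((a * b) • s) ((a * b)⁻¹ • s) s ≤ P + 9 * δ := by
    have := gromov_le_of_lt_gromov hδ hgeo hhyp (w := s) (x := b⁻¹ • s) (y := (a * b)⁻¹ • s)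
      (z := (a * b) • s)
    rw [gromov_comm ((a * b)⁻¹ • s), gromov_comm (b⁻¹ • s)] at this
    linarith [this (by linarith)]
  linarith

lemma dist_mul_smul_le_max (hδ : 0 ≤ δ) (hgeo : GeodesicMetricSpace S)
    (hhyp : RipsHyperbolic S δ) (hno : ∀ g : G, ¬ Loxodromic (S := S) g) (s : S) (a b : G) :
    dist s ((a * b) • s) ≤ max (dist s (a • s)) (dist s (b • s)) + 15 * δ := by
  have h := min_dist_smul_le_gromov hδ hgeo hhyp hno s a⁻¹ b
  rw [dist_inv_smul] at h
  linarith [dist_mul_smul a b s, min_add_max (dist s (a • s)) (dist s (b • s))]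

lemma sub_le_dist_mul_smul (hδ : 0 ≤ δ) (hgeo : GeodesicMetricSpace S)
    (hhyp : RipsHyperbolic S δ) (hno : ∀ g : G, ¬ Loxodromic (S := S) g) {s : S} {h c : G}
    (hc : dist s (h • s) + 15 * δ < dist s (c • s)) :
    dist s (c • s) - 15 * δ ≤ dist s ((h * c) • s) := by
  have h' := dist_mul_smul_le_max hδ hgeo hhyp hno s h⁻¹ (h * c)
  rw [inv_mul_cancel_left, dist_inv_smul] at h'
  rcases max_cases (dist s (h • s)) (dist s ((h * c) • s)) with ⟨hm, -⟩ | ⟨hm, -⟩ <;>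
    linarith

/-- `h • γ T` lies on the geodesic `h • γ` from `h • s` to `(h * c) • s`, and seen from `s` the
points `h⁻¹ • s`, `c • s` and `(h * c) • s` point in the same direction; so `γ T` and `h • γ T`
both sit at distance about `T` from `s` in that direction. -/
lemma dist_smul_le_of_isGeodesicSeg (hδ : 0 ≤ δ) (hgeo : GeodesicMetricSpace S)
    (hhyp : RipsHyperbolic S δ) (hno : ∀ g : G, ¬ Loxodromic (S := S) g) {s : S} {h c : G}
    {γ : ℝ → S} (hγ : IsGeodesicSeg γ s (c • s)) {T : ℝ} (hh : dist s (h • s) ≤ 2 * T)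
    (hc : 2 * T + 30 * δ < dist s (c • s)) : dist (γ T) (h • γ T) ≤ 57 * δ := by
  have hT₀ : 0 ≤ T := by linarith [dist_nonneg (x := s) (y := h • s)]
  have hT : T ∈ Set.Icc 0 (dist s (c • s)) := ⟨hT₀, by linarith⟩
  set x := γ T
  have hx : dist s x = T := hγ.dist_left hT
  have hxc : dist x (c • s) = dist s (c • s) - T := hγ.dist_right hT
  have hgx : gromov x (c • s) s = T := hγ.gromov_eq hT
  have hhc := sub_le_dist_mul_smul hδ hgeo hhyp hno (h := h) (c := c) (by linarith)
  have h₁ : T ≤ gromov (c • s) ((h * c) • s) s := by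
    have := min_dist_smul_le_gromov hδ hgeo hhyp hno s c (h * c)
    have := le_min (by linarith : dist s (c • s) - 15 * δ ≤ dist s (c • s)) hhc
    linarith
  have h₂ : T - 3 * δ ≤ gromov x ((h * c) • s) s :=
    sub_le_gromov_of_le_gromov hδ hgeo hhyp hgx.ge h₁
  have h₃ : T - 15 * δ ≤ gromov ((h * c) • s) (h • x) s := by
    have e : dist ((h * c) • s) (h • x) = dist s (c • s) - T := by
      rw [mul_smul, dist_smul, dist_comm, hxc]
    have tri := dist_triangle s (h • x) ((h * c) • s)
    rw [dist_comm (h • x), e] at tri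
    unfold gromov
    rw [e, dist_comm _ s, dist_comm (h • x) s]
    linarith
  have h₄ : T - 15 * δ - 3 * δ ≤ gromov x (h • x) s :=
    sub_le_gromov_of_le_gromov hδ hgeo hhyp (by linarith) h₃
  have h₅ : (dist s (h • s) - 15 * δ) / 2 ≤ gromov (h⁻¹ • s) (c • s) s := by
    have := min_dist_smul_le_gromov hδ hgeo hhyp hno s h⁻¹ c
    rw [dist_inv_smul, min_eq_left (by linarith)] at this
    linarith
  have h₆ : (dist s (h • s) - 15 * δ) / 2 - 3 * δ ≤ gromov (h⁻¹ • s) x s :=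
    sub_le_gromov_of_le_gromov hδ hgeo hhyp h₅ (by rw [gromov_comm, hgx]; linarith)
  have h₇ : dist s (h • x) ≤ T + 21 * δ := by
    rw [← dist_smul h⁻¹, inv_smul_smul, dist_eq_gromov _ _ s, dist_comm _ s, dist_inv_smul,
      dist_comm x, hx]
    linarith
  rw [dist_eq_gromov x (h • x) s, dist_comm x, hx, dist_comm (h • x)]
  linarith

end IsometricAction

section Orbit

variable {G S : Type*} [Group G] [MetricSpace S] [MulAction G S]

lemma exists_lt_dist_smul_of_not_isBounded {s : S} (hs : ¬ IsBounded (MulAction.orbit G s))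
    (R : ℝ) : ∃ g : G, R < dist s (g • s) := by
  by_contra! h
  refine hs ((Metric.isBounded_closedBall (x := s) (r := R)).subset ?_)
  rintro _ ⟨g, rfl⟩
  rw [Metric.mem_closedBall, dist_comm]
  exact h g

lemma infinite_of_not_isBounded_orbit {s : S} (hs : ¬ IsBounded (MulAction.orbit G s)) :
    Infinite G := by
  by_contra hfin
  have := not_infinite_iff_finite.mp hfin
  exact hs (Set.finite_range fun g : G => g • s).isBounded

end Orbit

theorem stmt_6 {G S : Type*} [Group G] [MetricSpace S] [MulAction G S]
    [IsIsometricSMul G S] (δ : ℝ) (hδ : 0 ≤ δ)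
    (hgeo : GeodesicMetricSpace S) (hhyp : RipsHyperbolic S δ)
    (hproper : UniformlyProper G S)
    (hunb : ∃ s : S, ¬ Bornology.IsBounded (MulAction.orbit G s)) :
    ∃ g : G, Loxodromic (S := S) g := by
  by_contra! hno
  obtain ⟨s, hs⟩ := hunb
  have := infinite_of_not_isBounded_orbit hs
  obtain ⟨N, hN⟩ := hproper (57 * δ + 1) (by positivity)
  obtain ⟨H, hH⟩ := Infinite.exists_subset_card_eq G (N + 1)
  obtain ⟨R, hR⟩ := (H.finite_toSet.image fun h => dist s (h • s)).bddAbove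
  obtain ⟨c, hc⟩ := exists_lt_dist_smul_of_not_isBounded hs (R + 30 * δ)
  obtain ⟨γ, hγ⟩ := hgeo s (c • s)
  have hsub : (H : Set G) ⊆ {g | dist (γ (R / 2)) (g • γ (R / 2)) ≤ 57 * δ + 1} := fun h hh =>
    (dist_smul_le_of_isGeodesicSeg hδ hgeo hhyp hno hγ
      (by linarith [hR (Set.mem_image_of_mem _ hh)]) (by linarith)).trans (by linarith)
  have hcard := (Set.ncard_le_ncard hsub (hN _).1).trans (hN _).2
  rw [Set.ncard_coe_finset, hH] at hcard
  omega
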